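/- Let A be an n×n Hermitian matrix and θ ∈ ℝ. Then the uniform average over s = ±1 satisfies: (1/2)Σ_{s=±1} e^{isθA} ρ e^{-isθA} = ρ + θ²(AρA - ½(A²ρ + ρA²)) + R(θ), where ‖R(θ)‖ ≤ C θ⁴ for θ ∈ [-1,1], with C depending only on ‖A‖ and ‖ρ‖. In particular the averaged channel agrees with e^{θ²𝓓}(ρ) up to O(θ⁴), where 𝓓(ρ) = AρA - ½{A²,ρ}. -/

import Mathlib

/-!
Conjugation by `e^X` is the exponential of the commutator superoperator:
`e^X ρ e^{-X} = e^{ad X} ρ`. Averaging over `±X` therefore applies `cosh (ad X)`, whose Taylor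
series has only even terms, so the average is `ρ + ½ (ad X)² ρ` up to `O(‖X‖⁴)`. For `X = iθA`
one has `½ (ad X)² ρ = θ² 𝓓(ρ)`, and `e^{θ²𝓓} = 1 + θ²𝓓 + O(θ⁴)` gives the second estimate.
-/

open Matrix NormedSpace

attribute [local instance] Matrix.frobeniusNormedAddCommGroup Matrix.frobeniusNormedSpace

/-- The dissipator superoperator `𝓓(ρ) = AρA - ½{A²,ρ}` as a linear map. -/
noncomputable def dissipator {n : ℕ} (A : Matrix (Fin n) (Fin n) ℂ) :
    Matrix (Fin n) (Fin n) ℂ →ₗ[ℂ] Matrix (Fin n) (Fin n) ℂ where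
  toFun ρ := A * ρ * A - (1/2 : ℂ) • (A ^ 2 * ρ + ρ * A ^ 2)
  map_add' x y := by
    simp only [mul_add, add_mul, smul_add]
    abel
  map_smul' c x := by
    simp only [RingHom.id_apply, Matrix.mul_smul, Matrix.smul_mul, smul_add, smul_sub,
      smul_comm c]

instance clmMatrixIsTopologicalRing {n : ℕ} :
    IsTopologicalRing (Matrix (Fin n) (Fin n) ℂ →L[ℂ] Matrix (Fin n) (Fin n) ℂ) := by
  let _ : NormedRing (Matrix (Fin n) (Fin n) ℂ →L[ℂ] Matrix (Fin n) (Fin n) ℂ) :=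
    ContinuousLinearMap.toNormedRing
  exact NonUnitalSeminormedRing.toIsTopologicalRing

open Finset Nat

section BanachAlgebra

variable {𝕂 𝔸 : Type*} [RCLike 𝕂] [NormedRing 𝔸] [NormedAlgebra 𝕂 𝔸]

variable (𝕂) in
noncomputable def ad : 𝔸 →L[𝕂] 𝔸 →L[𝕂] 𝔸 :=
  ContinuousLinearMap.mul 𝕂 𝔸 - (ContinuousLinearMap.mul 𝕂 𝔸).flip

theorem ad_apply (X ρ : 𝔸) : ad 𝕂 X ρ = X * ρ - ρ * X := rfl

theorem norm_ad_le (X : 𝔸) : ‖ad 𝕂 X‖ ≤ 2 * ‖X‖ :=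
  ContinuousLinearMap.opNorm_le_bound _ (by positivity) fun ρ ↦ by
    rw [ad_apply]
    linarith [norm_sub_le (X * ρ) (ρ * X), norm_mul_le X ρ, norm_mul_le ρ X]

variable (𝕂) in
noncomputable def mulLeftAlgHom : 𝔸 →ₐ[𝕂] (𝔸 →L[𝕂] 𝔸) :=
  AlgHom.ofLinearMap (ContinuousLinearMap.mul 𝕂 𝔸).toLinearMap (by ext; simp)
    fun X Y ↦ by ext; simp [mul_assoc]

variable (𝕂) in
noncomputable def mulRightAlgHom : 𝔸ᵐᵒᵖ →ₐ[𝕂] (𝔸 →L[𝕂] 𝔸) :=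
  AlgHom.ofLinearMap
    ((ContinuousLinearMap.mul 𝕂 𝔸).flip.toLinearMap ∘ₗ
      (MulOpposite.opLinearEquiv 𝕂 (M := 𝔸)).symm.toLinearMap)
    (by ext; simp) fun X Y ↦ by ext; simp [mul_assoc]

variable [CompleteSpace 𝔸]

theorem norm_exp_sub_sum_range_le (x : 𝔸) {k : ℕ} (hk : k ≠ 0) :
    ‖exp x - ∑ i ∈ range k, (i ! : 𝕂)⁻¹ • x ^ i‖ ≤ ‖x‖ ^ k * Real.exp ‖x‖ := by
  have hexp := exp_series_hasSum_exp' (𝕂 := 𝕂) x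
  rw [← hexp.tsum_eq, ← hexp.summable.sum_add_tsum_nat_add k, add_sub_cancel_left]
  have hreal : HasSum (fun i ↦ ‖x‖ ^ k * ((i ! : ℝ)⁻¹ * ‖x‖ ^ i)) (‖x‖ ^ k * Real.exp ‖x‖) := by
    simpa [Real.exp_eq_exp_ℝ, smul_eq_mul] using
      (exp_series_hasSum_exp' (𝕂 := ℝ) ‖x‖).mul_left (‖x‖ ^ k)
  refine tsum_of_norm_bounded hreal fun i ↦ ?_
  have hfact : ((i + k) ! : ℝ)⁻¹ ≤ (i ! : ℝ)⁻¹ :=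
    inv_anti₀ (by positivity) (mod_cast Nat.factorial_le (Nat.le_add_right i k))
  calc ‖((i + k) ! : 𝕂)⁻¹ • x ^ (i + k)‖ = ((i + k) ! : ℝ)⁻¹ * ‖x ^ (i + k)‖ := by
        rw [norm_smul, norm_inv, RCLike.norm_natCast]
    _ ≤ (i ! : ℝ)⁻¹ * ‖x‖ ^ (i + k) := by
        gcongr
        exact norm_pow_le' x (by omega)
    _ = ‖x‖ ^ k * ((i ! : ℝ)⁻¹ * ‖x‖ ^ i) := by ring

theorem norm_half_exp_add_exp_neg_sub_le (x : 𝔸) :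
    ‖(2⁻¹ : 𝕂) • (exp x + exp (-x)) - (1 + (2⁻¹ : 𝕂) • x ^ 2)‖ ≤ ‖x‖ ^ 4 * Real.exp ‖x‖ := by
  set S : 𝔸 → 𝔸 := fun y ↦ ∑ i ∈ range 4, (i ! : 𝕂)⁻¹ • y ^ i
  have heven : (2⁻¹ : 𝕂) • (S x + S (-x)) = 1 + (2⁻¹ : 𝕂) • x ^ 2 := by
    simp only [S, sum_range_succ, sum_range_zero, factorial, even_two.neg_pow,
      (by decide : Odd 3).neg_pow, pow_zero, pow_one]
    module
  have hx := norm_exp_sub_sum_range_le (𝕂 := 𝕂) x (k := 4) (by norm_num)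
  have hnx := norm_exp_sub_sum_range_le (𝕂 := 𝕂) (-x) (k := 4) (by norm_num)
  rw [norm_neg] at hnx
  rw [← heven, ← smul_sub, add_sub_add_comm, norm_smul, norm_inv, RCLike.norm_ofNat]
  linarith [norm_add_le (exp x - S x) (exp (-x) - S (-x))]

theorem exp_mul_mul_exp_neg (X ρ : 𝔸) : exp X * ρ * exp (-X) = exp (ad 𝕂 X) ρ := by
  let _ : NormedAlgebra ℚ 𝔸 := .restrictScalars ℚ 𝕂 𝔸
  let _ : NormedAlgebra ℚ (𝔸 →L[𝕂] 𝔸) := .restrictScalars ℚ 𝕂 (𝔸 →L[𝕂] 𝔸)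
  have hL : Continuous (mulLeftAlgHom 𝕂 (𝔸 := 𝔸)) := (ContinuousLinearMap.mul 𝕂 𝔸).continuous
  have hR : Continuous (mulRightAlgHom 𝕂 (𝔸 := 𝔸)) :=
    (ContinuousLinearMap.mul 𝕂 𝔸).flip.continuous.comp MulOpposite.continuous_unop
  have hsplit : ad 𝕂 X = mulLeftAlgHom 𝕂 X + mulRightAlgHom 𝕂 (.op (-X)) := by
    ext ρ; simp [ad_apply, mulLeftAlgHom, mulRightAlgHom, sub_eq_add_neg]
  have hcomm : Commute (mulLeftAlgHom 𝕂 X) (mulRightAlgHom 𝕂 (.op (-X))) := by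
    ext ρ; simp [mulLeftAlgHom, mulRightAlgHom, mul_assoc]
  rw [hsplit, exp_add_of_commute hcomm, ← map_exp _ hL, ← map_exp _ hR, exp_op]
  simp [mulLeftAlgHom, mulRightAlgHom, mul_assoc]

theorem norm_half_conj_add_conj_neg_sub_le (X ρ : 𝔸) {c : 𝕂} (hc : ‖c‖ ≤ 1) :
    ‖(2⁻¹ : 𝕂) • (exp (c • X) * ρ * exp (-(c • X)) + exp (-(c • X)) * ρ * exp (c • X)) -
        (ρ + (2⁻¹ * c ^ 2) • ad 𝕂 X (ad 𝕂 X ρ))‖ ≤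
      (2 * ‖X‖) ^ 4 * Real.exp (2 * ‖X‖) * ‖ρ‖ * ‖c‖ ^ 4 := by
  set x := c • ad 𝕂 X
  have hx : ‖x‖ ≤ ‖c‖ * (2 * ‖X‖) := by
    rw [norm_smul]; gcongr; exact norm_ad_le X
  have hx' : ‖x‖ ≤ 2 * ‖X‖ := hx.trans (mul_le_of_le_one_left (by positivity) hc)
  have hcosh : (2⁻¹ : 𝕂) • (exp (c • X) * ρ * exp (-(c • X)) + exp (-(c • X)) * ρ * exp (c • X)) -
      (ρ + (2⁻¹ * c ^ 2) • ad 𝕂 X (ad 𝕂 X ρ)) =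
      ((2⁻¹ : 𝕂) • (exp x + exp (-x)) - (1 + (2⁻¹ : 𝕂) • x ^ 2) : 𝔸 →L[𝕂] 𝔸) ρ := by
    have hneg := exp_mul_mul_exp_neg (𝕂 := 𝕂) (-(c • X)) ρ
    rw [neg_neg] at hneg
    rw [exp_mul_mul_exp_neg (𝕂 := 𝕂), hneg, map_neg, map_smul]
    simp [x, pow_two, smul_smul]
  rw [hcosh]
  calc _ ≤ ‖(2⁻¹ : 𝕂) • (exp x + exp (-x)) - (1 + (2⁻¹ : 𝕂) • x ^ 2)‖ * ‖ρ‖ :=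
        ContinuousLinearMap.le_opNorm _ _
    _ ≤ ‖x‖ ^ 4 * Real.exp ‖x‖ * ‖ρ‖ := by gcongr; exact norm_half_exp_add_exp_neg_sub_le x
    _ ≤ (‖c‖ * (2 * ‖X‖)) ^ 4 * Real.exp (2 * ‖X‖) * ‖ρ‖ := by gcongr
    _ = (2 * ‖X‖) ^ 4 * Real.exp (2 * ‖X‖) * ‖ρ‖ * ‖c‖ ^ 4 := by ring

theorem norm_exp_smul_apply_sub_le {E : Type*} [NormedAddCommGroup E] [NormedSpace 𝕂 E]
    [CompleteSpace E] (T : E →L[𝕂] E) (v : E) {c : 𝕂} (hc : ‖c‖ ≤ 1) :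
    ‖exp (c • T) v - (v + c • T v)‖ ≤ ‖T‖ ^ 2 * Real.exp ‖T‖ * ‖v‖ * ‖c‖ ^ 2 := by
  have hcT : ‖c • T‖ ≤ ‖T‖ := by
    rw [norm_smul]; exact mul_le_of_le_one_left (norm_nonneg T) hc
  have happly : exp (c • T) v - (v + c • T v) = (exp (c • T) - (1 + c • T)) v := by simp
  have hexp : ‖exp (c • T) - (1 + c • T)‖ ≤ ‖c • T‖ ^ 2 * Real.exp ‖c • T‖ := by
    simpa [sum_range_succ] using norm_exp_sub_sum_range_le (𝕂 := 𝕂) (c • T) two_ne_zero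
  rw [happly]
  calc _ ≤ ‖exp (c • T) - (1 + c • T)‖ * ‖v‖ := ContinuousLinearMap.le_opNorm _ _
    _ ≤ ‖c • T‖ ^ 2 * Real.exp ‖c • T‖ * ‖v‖ := by gcongr
    _ ≤ (‖c‖ * ‖T‖) ^ 2 * Real.exp ‖T‖ * ‖v‖ := by rw [← norm_smul]; gcongr
    _ = ‖T‖ ^ 2 * Real.exp ‖T‖ * ‖v‖ * ‖c‖ ^ 2 := by ring

end BanachAlgebra

section Matrix

variable {n : ℕ}

theorem dissipator_apply (A ρ : Matrix (Fin n) (Fin n) ℂ) :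
    dissipator A ρ = A * ρ * A - (1/2 : ℂ) • (A ^ 2 * ρ + ρ * A ^ 2) :=
  rfl

noncomputable def averagedChannel (A : Matrix (Fin n) (Fin n) ℂ) (θ : ℝ)
    (ρ : Matrix (Fin n) (Fin n) ℂ) : Matrix (Fin n) (Fin n) ℂ :=
  (1/2 : ℂ) • ∑ s : Bool,
    exp (((if s then 1 else -1 : ℂ) * Complex.I * (θ : ℂ)) • A) * ρ *
      exp ((-((if s then 1 else -1 : ℂ) * Complex.I * (θ : ℂ))) • A)

theorem norm_averagedChannel_sub_le (A ρ : Matrix (Fin n) (Fin n) ℂ) {θ : ℝ}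
    (hθ : θ ∈ Set.Icc (-1 : ℝ) 1) :
    ‖averagedChannel A θ ρ - (ρ + (θ ^ 2 : ℂ) • dissipator A ρ)‖ ≤
      (2 * ‖A‖) ^ 4 * Real.exp (2 * ‖A‖) * ‖ρ‖ * θ ^ 4 := by
  let _ : NormedRing (Matrix (Fin n) (Fin n) ℂ) := Matrix.frobeniusNormedRing
  let _ : NormedAlgebra ℂ (Matrix (Fin n) (Fin n) ℂ) := Matrix.frobeniusNormedAlgebra
  have hc : ‖Complex.I * θ‖ ≤ 1 := by simpa [abs_le] using hθ
  have hc4 : ‖Complex.I * θ‖ ^ 4 = θ ^ 4 := by simp [Even.pow_abs ⟨2, rfl⟩]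
  set X := (Complex.I * θ) • A
  have havg : averagedChannel A θ ρ =
      (2⁻¹ : ℂ) • (exp X * ρ * exp (-X) + exp (-X) * ρ * exp X) := by
    simp [averagedChannel, X, neg_smul, one_div]
  have hcenter :
      (θ ^ 2 : ℂ) • dissipator A ρ = (2⁻¹ * (Complex.I * θ) ^ 2) • ad ℂ A (ad ℂ A ρ) := by
    simp only [dissipator_apply, ad_apply, mul_pow, Complex.I_sq]
    simp only [pow_two, mul_sub, sub_mul, mul_assoc]
    module
  rw [havg, hcenter, ← hc4]
  exact norm_half_conj_add_conj_neg_sub_le A ρ hc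

theorem exists_norm_exp_dissipator_sub_le (A ρ : Matrix (Fin n) (Fin n) ℂ) :
    ∃ K : ℝ, ∀ θ : ℝ, θ ∈ Set.Icc (-1 : ℝ) 1 →
      ‖exp ((θ ^ 2 : ℂ) • LinearMap.toContinuousLinearMap (dissipator A)) ρ -
        (ρ + (θ ^ 2 : ℂ) • dissipator A ρ)‖ ≤ K * θ ^ 4 := by
  set D := LinearMap.toContinuousLinearMap (dissipator A)
  obtain ⟨K, hK⟩ : ∃ K : ℝ, ∀ c : ℂ, ‖c‖ ≤ 1 → ‖exp (c • D) ρ - (ρ + c • D ρ)‖ ≤ K * ‖c‖ ^ 2 :=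
    ⟨_, fun c hc ↦ norm_exp_smul_apply_sub_le D ρ hc⟩
  refine ⟨K, fun θ hθ ↦ ?_⟩
  have hc : ‖(θ ^ 2 : ℂ)‖ ≤ 1 := by simpa [abs_le, sq_le_one_iff_abs_le_one] using hθ
  have hc2 : ‖(θ ^ 2 : ℂ)‖ ^ 2 = θ ^ 4 := by
    rw [norm_pow, Complex.norm_real, Real.norm_eq_abs, sq_abs]; ring
  rw [← hc2]
  exact hK _ hc

end Matrix

theorem stmt_10_general {n : ℕ} (A ρ : Matrix (Fin n) (Fin n) ℂ) :
    (∃ C : ℝ, ∀ θ : ℝ, θ ∈ Set.Icc (-1 : ℝ) 1 →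
      ‖(1/2 : ℂ) • (∑ s : Bool,
            exp (((if s then 1 else -1 : ℂ) * Complex.I * (θ : ℂ)) • A) * ρ *
              exp ((-((if s then 1 else -1 : ℂ) * Complex.I * (θ : ℂ))) • A)) -
          (ρ + (θ ^ 2 : ℂ) • (A * ρ * A - (1/2 : ℂ) • (A ^ 2 * ρ + ρ * A ^ 2)))‖
        ≤ C * θ ^ 4) ∧
    (∃ C' : ℝ, ∀ θ : ℝ, θ ∈ Set.Icc (-1 : ℝ) 1 →
      ‖(1/2 : ℂ) • (∑ s : Bool,
            exp (((if s then 1 else -1 : ℂ) * Complex.I * (θ : ℂ)) • A) * ρ *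
              exp ((-((if s then 1 else -1 : ℂ) * Complex.I * (θ : ℂ))) • A)) -
          exp ((θ ^ 2 : ℂ) • LinearMap.toContinuousLinearMap (dissipator A)) ρ‖
        ≤ C' * θ ^ 4) := by
  obtain ⟨K, hK⟩ := exists_norm_exp_dissipator_sub_le A ρ
  refine ⟨⟨_, fun θ hθ ↦ norm_averagedChannel_sub_le A ρ hθ⟩,
    (2 * ‖A‖) ^ 4 * Real.exp (2 * ‖A‖) * ‖ρ‖ + K, fun θ hθ ↦ ?_⟩
  refine (norm_sub_le_norm_sub_add_norm_sub _ (ρ + (θ ^ 2 : ℂ) • dissipator A ρ) _).trans ?_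
  rw [add_mul, norm_sub_rev (ρ + _)]
  exact add_le_add (norm_averagedChannel_sub_le A ρ hθ) (hK θ hθ)

theorem stmt_10 {n : ℕ} (A ρ : Matrix (Fin n) (Fin n) ℂ) (hA : A.IsHermitian) :
    (∃ C : ℝ, ∀ θ : ℝ, θ ∈ Set.Icc (-1 : ℝ) 1 →
      ‖(1/2 : ℂ) • (∑ s : Bool,
            exp (((if s then 1 else -1 : ℂ) * Complex.I * (θ : ℂ)) • A) * ρ *
              exp ((-((if s then 1 else -1 : ℂ) * Complex.I * (θ : ℂ))) • A)) -
          (ρ + (θ ^ 2 : ℂ) • (A * ρ * A - (1/2 : ℂ) • (A ^ 2 * ρ + ρ * A ^ 2)))‖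
        ≤ C * θ ^ 4) ∧
    (∃ C' : ℝ, ∀ θ : ℝ, θ ∈ Set.Icc (-1 : ℝ) 1 →
      ‖(1/2 : ℂ) • (∑ s : Bool,
            exp (((if s then 1 else -1 : ℂ) * Complex.I * (θ : ℂ)) • A) * ρ *
              exp ((-((if s then 1 else -1 : ℂ) * Complex.I * (θ : ℂ))) • A)) -
          exp ((θ ^ 2 : ℂ) • LinearMap.toContinuousLinearMap (dissipator A)) ρ‖
        ≤ C' * θ ^ 4) :=
  stmt_10_general A ρ
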